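/- Let J : V → W be linear and L_W a lagrangian subspace of W ⊕ W*, and B : W → W* a skew-symmetric map. Then J is a strong Dirac map from (V, L) to (W, L_W) if and only if J is a strong Dirac map from (V, τ_{J*B}(L)) to (W, τ_B(L_W)), where τ_B(L_W) = {(Y, β + B(Y)) : (Y,β) ∈ L_W} and J*B := J* ∘ B ∘ J. -/
import Mathlib


/-- `J` is a strong Dirac (linear) map from `(V,L)` to `(W,L_W)`. -/
def IsStrongDirac {V W : Type*} [AddCommGroup V] [Module ℝ V] [AddCommGroup W] [Module ℝ W]
    (J : V →ₗ[ℝ] W) (L : Submodule ℝ (V × Module.Dual ℝ V))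
    (LW : Submodule ℝ (W × Module.Dual ℝ W)) : Prop :=
  (∀ q : W × Module.Dual ℝ W,
      q ∈ LW ↔ ∃ (X : V) (β : Module.Dual ℝ W), q = (J X, β) ∧ (X, J.dualMap β) ∈ L) ∧
  (∀ X : V, J X = 0 → (X, (0 : Module.Dual ℝ V)) ∈ L → X = 0)

/-- The gauge transformation `(X,α) ↦ (X, α + B X)` as a linear map. -/
def gaugeMap {W : Type*} [AddCommGroup W] [Module ℝ W] (B : W →ₗ[ℝ] Module.Dual ℝ W) :
    (W × Module.Dual ℝ W) →ₗ[ℝ] (W × Module.Dual ℝ W) :=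
  LinearMap.prod (LinearMap.fst ℝ W (Module.Dual ℝ W))
    (LinearMap.snd ℝ W (Module.Dual ℝ W) + B.comp (LinearMap.fst ℝ W (Module.Dual ℝ W)))

lemma mem_map_gauge {W : Type*} [AddCommGroup W] [Module ℝ W]
    (B : W →ₗ[ℝ] Module.Dual ℝ W) (S : Submodule ℝ (W × Module.Dual ℝ W))
    (x : W × Module.Dual ℝ W) :
    x ∈ S.map (gaugeMap B) ↔ (x.1, x.2 - B x.1) ∈ S := by
  constructor
  · rintro ⟨y, hy, rfl⟩
    simpa [gaugeMap] using hy
  · intro h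
    exact ⟨(x.1, x.2 - B x.1), h, by simp [gaugeMap]⟩

lemma isStrongDirac_gauge_mp {V W : Type*}
    [AddCommGroup V] [Module ℝ V] [AddCommGroup W] [Module ℝ W]
    (J : V →ₗ[ℝ] W) (B : W →ₗ[ℝ] Module.Dual ℝ W)
    (L : Submodule ℝ (V × Module.Dual ℝ V)) (LW : Submodule ℝ (W × Module.Dual ℝ W))
    (h : IsStrongDirac J L LW) :
    IsStrongDirac J (L.map (gaugeMap (J.dualMap ∘ₗ B ∘ₗ J))) (LW.map (gaugeMap B)) := by
  obtain ⟨h1, h2⟩ := h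
  constructor
  · intro q
    rw [mem_map_gauge]
    constructor
    · intro hq
      obtain ⟨X, β, heq, hmem⟩ := (h1 _).mp hq
      obtain ⟨he1, he2⟩ := Prod.ext_iff.mp heq
      refine ⟨X, β + B (J X), ?_, ?_⟩
      · have hq2 : q.2 = β + B (J X) := by
          simp only at he1 he2
          rw [← he1, ← he2]; abel
        rw [Prod.ext_iff]; exact ⟨he1, hq2⟩
      · rw [mem_map_gauge]
        simpa using hmem
    · rintro ⟨X, β, rfl, hmem⟩
      rw [mem_map_gauge] at hmem
      have : (J X, β - B (J X)) ∈ LW := by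
        apply (h1 _).mpr
        exact ⟨X, β - B (J X), rfl, by simpa using hmem⟩
      simpa using this
  · intro X hJX hmem
    rw [mem_map_gauge] at hmem
    simp only [LinearMap.comp_apply, hJX, map_zero, sub_zero] at hmem
    exact h2 X hJX (by simpa using hmem)


/-- `J` is a strong Dirac map from `(V,L)` to `(W,L_W)` iff it is a
strong Dirac map from `(V, τ_{J*B}(L))` to `(W, τ_B(L_W))`, for `B` skew. -/
theorem strong_dirac_gauge_iff {V W : Type*}
    [AddCommGroup V] [Module ℝ V] [FiniteDimensional ℝ V]
    [AddCommGroup W] [Module ℝ W] [FiniteDimensional ℝ W]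
    (J : V →ₗ[ℝ] W)
    (B : W →ₗ[ℝ] Module.Dual ℝ W) (hB : ∀ x y : W, B x y = - B y x)
    (L : Submodule ℝ (V × Module.Dual ℝ V))
    (LW : Submodule ℝ (W × Module.Dual ℝ W))
    (hL : ∀ x : V × Module.Dual ℝ V, x ∈ L ↔ ∀ y ∈ L, y.2 x.1 + x.2 y.1 = 0)
    (hLW : ∀ x : W × Module.Dual ℝ W, x ∈ LW ↔ ∀ y ∈ LW, y.2 x.1 + x.2 y.1 = 0) :
    IsStrongDirac J L LW ↔
      IsStrongDirac J
        (L.map (gaugeMap (J.dualMap ∘ₗ B ∘ₗ J)))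
        (LW.map (gaugeMap B)) := by
  constructor
  · exact isStrongDirac_gauge_mp J B L LW
  · intro h
    have h' := isStrongDirac_gauge_mp J (-B) _ _ h
    have eLW : ((LW.map (gaugeMap B)).map (gaugeMap (-B))) = LW := by
      ext x
      rw [mem_map_gauge, mem_map_gauge]
      simp
    have eL : ((L.map (gaugeMap (J.dualMap ∘ₗ B ∘ₗ J))).map
        (gaugeMap (J.dualMap ∘ₗ (-B) ∘ₗ J))) = L := by
      ext x
      rw [mem_map_gauge, mem_map_gauge]
      simp
    rwa [eLW, eL] at h'
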